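/- For a uniformly random permutation ψ of a finite universe V and nonempty subsets A, B ⊆ V, the probability that the minimum of ψ applied to A equals the minimum of ψ applied to B is |A ∩ B| / |A ∪ B| (the Jaccard similarity of A and B). -/

import Mathlib

/-!
Put `U = A ∪ B`. Since `min ψ(U) = min (min ψ(A)) (min ψ(B))`, the two minima agree exactly when
the point of `U` that `ψ` sends lowest lies in `A ∩ B`. Right multiplication by a transposition
of two points of `U` exchanges them in this role, so that point is uniformly distributed on `U`.
-/

open Finset

theorem Finset.min'_eq_min'_iff_min'_union_mem_inter {α : Type*} [LinearOrder α]
    {s t : Finset α} (hs : s.Nonempty) (ht : t.Nonempty) :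
    s.min' hs = t.min' ht ↔ (s ∪ t).min' (hs.mono subset_union_left) ∈ s ∩ t := by
  rw [min'_union hs ht, mem_inter]
  constructor
  · intro h
    rw [h, min_self, ← h]
    exact ⟨min'_mem s hs, h ▸ min'_mem t ht⟩
  · rintro ⟨hms, hmt⟩
    rcases le_total (s.min' hs) (t.min' ht) with hle | hle
    · rw [min_eq_left hle] at hmt
      exact le_antisymm hle (min'_le t _ hmt)
    · rw [min_eq_right hle] at hms
      exact le_antisymm (min'_le s _ hms) hle

namespace Equiv.Perm

variable {α : Type*} [LinearOrder α] {s : Finset α} (hs : s.Nonempty)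

def argminOn (ψ : Perm α) : α :=
  ψ.symm ((s.image ψ).min' (hs.image ψ))

theorem apply_argminOn (ψ : Perm α) : ψ (argminOn hs ψ) = (s.image ψ).min' (hs.image ψ) :=
  ψ.apply_symm_apply _

theorem argminOn_mem (ψ : Perm α) : argminOn hs ψ ∈ s := by
  rw [← ψ.injective.mem_finset_image, apply_argminOn]
  exact min'_mem _ _

theorem min'_image_eq_min'_image_iff {A B : Finset α} (hA : A.Nonempty) (hB : B.Nonempty)
    (ψ : Perm α) :
    (A.image ψ).min' (hA.image ψ) = (B.image ψ).min' (hB.image ψ) ↔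
      argminOn (hA.mono subset_union_left : (A ∪ B).Nonempty) ψ ∈ A ∩ B := by
  rw [min'_eq_min'_iff_min'_union_mem_inter, ← ψ.injective.mem_finset_image (s := A ∩ B),
    apply_argminOn, image_inter _ _ ψ.injective]
  simp only [image_union]

theorem argminOn_mul_swap {x y : α} (hx : x ∈ s) (hy : y ∈ s) (ψ : Perm α) :
    argminOn hs (ψ * swap x y) = swap x y (argminOn hs ψ) := by
  have hswap : s.image (swap x y) = s :=
    coe_injective (by simpa using (swap_bijOn_self (iff_of_true hx hy)).image_eq)
  have himage : s.image (ψ * swap x y) = s.image ψ := by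
    rw [coe_mul, ← image_image, hswap]
  rw [← (ψ * swap x y).injective.eq_iff, apply_argminOn, mul_apply, swap_apply_self,
    apply_argminOn]
  simp only [himage]

section Fintype

variable [Fintype α]

theorem card_argminOn_eq {x y : α} (hx : x ∈ s) (hy : y ∈ s) :
    #{ψ | argminOn hs ψ = x} = #{ψ | argminOn hs ψ = y} := by
  refine card_nbij' (· * swap x y) (· * swap x y) ?_ ?_ ?_ ?_
  · intro ψ hψ
    simp only [coe_filter, mem_univ, true_and, Set.mem_ofPred_eq] at hψ ⊢
    rw [argminOn_mul_swap hs hx hy, hψ, swap_apply_left]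
  · intro ψ hψ
    simp only [coe_filter, mem_univ, true_and, Set.mem_ofPred_eq] at hψ ⊢
    rw [argminOn_mul_swap hs hx hy, hψ, swap_apply_right]
  all_goals intro ψ _; simp

theorem card_argminOn_mem {t : Finset α} (ht : t ⊆ s) {x : α} (hx : x ∈ s) :
    #{ψ | argminOn hs ψ ∈ t} = #t * #{ψ | argminOn hs ψ = x} := by
  rw [← sum_card_fiberwise_eq_card_filter]
  exact sum_const_nat fun y hy => card_argminOn_eq hs (ht hy) hx

theorem card_argminOn_mem_mul_card {t : Finset α} (ht : t ⊆ s) :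
    #{ψ | argminOn hs ψ ∈ t} * #s = #t * Fintype.card (Perm α) := by
  obtain ⟨x, hx⟩ := id hs
  have hall : #{ψ | argminOn hs ψ ∈ s} = Fintype.card (Perm α) := by
    rw [filter_true_of_mem fun ψ _ => argminOn_mem hs ψ, card_univ]
  rw [← hall, card_argminOn_mem hs ht hx, card_argminOn_mem hs subset_rfl hx]
  ring

end Fintype

end Equiv.Perm

/-- Min-hash collision probability: for a uniformly random permutation ψ of `Fin n`
and nonempty subsets A, B, the probability that `min ψ(A) = min ψ(B)` equals the
Jaccard similarity `|A ∩ B| / |A ∪ B|`. -/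
theorem minhash_collision_prob (n : ℕ) (A B : Finset (Fin n))
    (hA : A.Nonempty) (hB : B.Nonempty) :
    ((Finset.univ.filter (fun ψ : Equiv.Perm (Fin n) =>
        (A.image ψ).min' (hA.image ψ) = (B.image ψ).min' (hB.image ψ))).card : ℝ) /
      (Fintype.card (Equiv.Perm (Fin n)) : ℝ)
    = ((A ∩ B).card : ℝ) / ((A ∪ B).card : ℝ) := by
  have hU : (A ∪ B).Nonempty := hA.mono subset_union_left
  rw [filter_congr fun ψ _ => Equiv.Perm.min'_image_eq_min'_image_iff hA hB ψ,
    div_eq_div_iff (by positivity) (by exact_mod_cast hU.card_pos.ne')]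
  exact_mod_cast Equiv.Perm.card_argminOn_mem_mul_card hU inter_subset_union
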